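/- Let U_1,...,U_n be real univariate polynomials of degrees e_1,...,e_n ≥ 1 respectively that are pairwise relatively prime. Then the generalized Sylvester matrix N(U_1,...,U_n) has full column rank (its rank equals its number of columns e_1 + e_2 + ... + e_n). -/

import Mathlib

open Polynomial Finset

/-- Entry formula for the convolution (Toeplitz) matrix of a polynomial `P`
regarded as having degree `m`: column `c` carries the coefficient vector of `P`
(in degree-descending order) shifted down by `c`. -/
noncomputable def convEntry (P : ℝ[X]) (m r c : ℕ) : ℝ :=
  if c ≤ r ∧ r ≤ c + m then P.coeff (m + c - r) else 0

/-- The convolution matrix `C_j(P)` of a polynomial `P` of degree `m`: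
it has `m + j + 1` rows and `j + 1` columns, and `C_j(P) · h` is the
coefficient vector (degree-descending) of `H · P` when `h` is the
coefficient vector of a polynomial `H` of degree at most `j`. -/
noncomputable def convMat (P : ℝ[X]) (m j : ℕ) : Matrix (Fin (m + j + 1)) (Fin (j + 1)) ℝ :=
  fun r c => convEntry P m r c

/-- The `k`-th generalized subresultant matrix `N_k(P_1, ..., P_n)` (Rupprecht's
formulation): for `i = 2, ..., n`, the `i`-th block row is
`( C_{d_1-1-k}(P_i), 0, ..., 0, C_{d_i-1-k}(P_1), 0, ..., 0 )` with
`C_{d_i-1-k}(P_1)` in the `i`-th block column.  The block row for `i = 0` is empty. -/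
noncomputable def genSubres {n : ℕ} [NeZero n] (P : Fin n → ℝ[X]) (d : Fin n → ℕ) (k : ℕ) :
    Matrix ((i : Fin n) × Fin (if i = 0 then 0 else d 0 + d i - k))
           ((j : Fin n) × Fin (d j - k)) ℝ :=
  fun r c =>
    if c.1 = 0 then convEntry (P r.1) (d r.1) r.2 c.2
    else if c.1 = r.1 then convEntry (P 0) (d 0) r.2 c.2
    else 0

/-- The squared 2-norm of the coefficient vector of a polynomial. -/
noncomputable def polyNormSq (Q : ℝ[X]) : ℝ :=
  ∑ j ∈ Finset.range (Q.natDegree + 1), (Q.coeff j) ^ 2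

/-! A vector `v` in the kernel of `N(U_1, ..., U_n)` splits into blocks `v_j`, which we read as
the descending coefficient vectors of polynomials `H_j` with `deg H_j < e_j`. The block row `i`
of `N v = 0` lists the coefficients of `U_i H_1 + U_1 H_i`, so this polynomial vanishes. For
`i = 2`, coprimality of `U_1` and `U_2` gives `U_1 ∣ H_1`, hence `H_1 = 0` for degree reasons;
then `U_1 H_i = 0` forces `H_i = 0` for every `i`, so `v = 0`. -/

open scoped Matrix

theorem Matrix.rank_eq_card_of_mulVec_eq_zero {m n K : Type*} [Fintype n] [Field K]
    {A : Matrix m n K} (hA : ∀ v, A *ᵥ v = 0 → v = 0) : A.rank = Fintype.card n := by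
  have hinj : Function.Injective A.mulVecLin := by
    rw [← LinearMap.ker_eq_bot, LinearMap.ker_eq_bot']
    exact hA
  rw [Matrix.rank, LinearMap.finrank_range_of_inj hinj, Module.finrank_fintype_fun_eq_card]

namespace Polynomial

theorem eq_zero_of_mul_add_mul_eq_zero {R : Type*} [CommRing R] [NoZeroDivisors R]
    {A B F G : R[X]} (hAB : IsCoprime A B) (h : B * F + A * G = 0) (hF : F.degree < A.degree) :
    F = 0 :=
  eq_zero_of_dvd_of_degree_lt (hAB.dvd_of_dvd_mul_left ⟨-G, by linear_combination h⟩) hF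

section ofDescCoeffs

variable {R : Type*} [Semiring R] {N : ℕ}

noncomputable def ofDescCoeffs (h : Fin N → R) : R[X] :=
  ∑ c : Fin N, h c • X ^ (N - 1 - (c : ℕ))

theorem degree_ofDescCoeffs_lt (h : Fin N → R) : (ofDescCoeffs h).degree < N := by
  rw [← mem_degreeLT]
  refine Submodule.sum_mem _ fun c _ => Submodule.smul_mem _ _ ?_
  rw [mem_degreeLT]
  exact (degree_X_pow_le _).trans_lt (by norm_cast; omega)

theorem coeff_ofDescCoeffs (h : Fin N → R) (c : Fin N) :
    (ofDescCoeffs h).coeff (N - 1 - c) = h c := by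
  rw [ofDescCoeffs, finsetSum_coeff, sum_eq_single c]
  · simp
  · intro b _ hbc
    rw [coeff_smul, coeff_X_pow, if_neg (by omega), smul_zero]
  · simp

theorem ofDescCoeffs_eq_zero_iff {h : Fin N → R} : ofDescCoeffs h = 0 ↔ h = 0 := by
  refine ⟨fun h0 => ?_, fun h0 => by simp [ofDescCoeffs, h0]⟩
  funext c
  rw [← coeff_ofDescCoeffs h c, h0, coeff_zero, Pi.zero_apply]

theorem degree_mul_ofDescCoeffs_lt {P : R[X]} {m : ℕ} (hP : P.natDegree ≤ m) (h : Fin N → R) :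
    (P * ofDescCoeffs h).degree < ↑(m + N) := by
  rcases eq_or_ne P 0 with rfl | hP0
  · simp
  rw [Nat.cast_add]
  exact (degree_mul_le _ _).trans_lt <| WithBot.add_lt_add_of_le_of_lt (degree_ne_bot.2 hP0)
    (degree_le_of_natDegree_le hP) (degree_ofDescCoeffs_lt h)

end ofDescCoeffs

end Polynomial

theorem sum_convEntry_mul {P : ℝ[X]} {m N r : ℕ} (hP : P.natDegree ≤ m) (h : Fin N → ℝ)
    (hr : r < m + N) :
    ∑ c : Fin N, convEntry P m r c * h c = (P * ofDescCoeffs h).coeff (m + N - 1 - r) := by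
  rw [ofDescCoeffs, mul_sum, finsetSum_coeff]
  refine sum_congr rfl fun c _ => ?_
  rw [mul_smul_comm, coeff_smul, smul_eq_mul, coeff_mul_X_pow', convEntry, mul_comm]
  by_cases h1 : (c : ℕ) ≤ r
  · by_cases h2 : r ≤ c + m
    · rw [if_pos ⟨h1, h2⟩, if_pos (by omega),
        show m + N - 1 - r - (N - 1 - c) = m + c - r by omega]
    · rw [if_neg (by tauto), if_neg (by omega), mul_zero]
  · rw [if_neg (by tauto), if_pos (by omega),
      coeff_eq_zero_of_natDegree_lt (by omega : P.natDegree < m + N - 1 - r - (N - 1 - c)),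
      mul_zero]

section genSubres

variable {n : ℕ} [NeZero n] {P : Fin n → ℝ[X]} {d : Fin n → ℕ} {k : ℕ} {i : Fin n}

theorem genSubres_mulVec_apply (hP : ∀ j, (P j).natDegree ≤ d j)
    (v : (j : Fin n) × Fin (d j - k) → ℝ) (hi : i ≠ 0) (hk0 : k ≤ d 0) (hki : k ≤ d i) (r : Fin (if i = 0 then 0 else d 0 + d i - k)) :
    (genSubres P d k *ᵥ v) ⟨i, r⟩ =
      (P i * ofDescCoeffs (fun c => v ⟨0, c⟩) + P 0 * ofDescCoeffs (fun c => v ⟨i, c⟩)).coeff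
        (d 0 + d i - k - 1 - r) := by
  have hr : (r : ℕ) < d 0 + d i - k := by simpa [hi] using r.isLt
  rw [Matrix.mulVec, dotProduct, Fintype.sum_sigma, Fintype.sum_eq_add 0 i hi.symm, coeff_add]
  · congr 1
    · simp only [genSubres, if_true]
      rw [sum_convEntry_mul (hP i) _ (by omega)]
      congr 2; omega
    · simp only [genSubres, hi, if_false, if_true]
      rw [sum_convEntry_mul (hP 0) _ (by omega)]
      congr 2; omega
  · rintro j ⟨hj0, hji⟩
    simp [genSubres, hj0, hji]

theorem mul_add_mul_eq_zero_of_genSubres_mulVec_eq_zero (hP : ∀ j, (P j).natDegree ≤ d j)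
    (hk : ∀ j, k ≤ d j) {v : (j : Fin n) × Fin (d j - k) → ℝ} (hv : genSubres P d k *ᵥ v = 0)
    (hi : i ≠ 0) :
    P i * ofDescCoeffs (fun c => v ⟨0, c⟩) + P 0 * ofDescCoeffs (fun c => v ⟨i, c⟩) = 0 := by
  ext t
  rw [coeff_zero]
  by_cases ht : t < d 0 + d i - k
  · have hr : d 0 + d i - k - 1 - t < if i = 0 then 0 else d 0 + d i - k := by
      rw [if_neg hi]; omega
    have hrow := congrFun hv ⟨i, ⟨_, hr⟩⟩
    rw [genSubres_mulVec_apply hP v hi (hk 0) (hk i), Pi.zero_apply] at hrow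
    rw [← hrow, Fin.val_mk]
    congr 1
    omega
  · refine coeff_eq_zero_of_degree_lt (lt_of_lt_of_le ?_
      (by exact_mod_cast not_lt.1 ht : ((d 0 + d i - k : ℕ) : WithBot ℕ) ≤ t))
    rw [← mem_degreeLT]
    refine add_mem ?_ ?_ <;> rw [mem_degreeLT]
    · convert degree_mul_ofDescCoeffs_lt (hP i) (fun c => v ⟨0, c⟩) using 2
      have := hk 0; omega
    · convert degree_mul_ofDescCoeffs_lt (hP 0) (fun c => v ⟨i, c⟩) using 2
      have := hk i; omega

end genSubres

/-- the generalized Sylvester matrix `N(U_1, ..., U_n)` of pairwise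
relatively prime polynomials of degrees `e_i ≥ 1` has full column rank, i.e.,
its rank equals its number of columns `e_1 + ... + e_n`. -/
theorem stmt5 {n : ℕ} [NeZero n] (hn : 2 ≤ n) (U : Fin n → ℝ[X]) (e : Fin n → ℕ)
    (hdeg : ∀ i, (U i).natDegree = e i) (hepos : ∀ i, 1 ≤ e i)
    (hcop : ∀ i j, i ≠ j → IsCoprime (U i) (U j)) :
    (genSubres U e 0).rank = ∑ i, e i := by
  rw [Matrix.rank_eq_card_of_mulVec_eq_zero, Fintype.card_sigma]
  · simp
  intro v hv
  have hU0 : U 0 ≠ 0 := ne_zero_of_natDegree_gt ((hepos 0).trans_eq (hdeg 0).symm)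
  have hrel : ∀ i ≠ 0,
      U i * ofDescCoeffs (fun c => v ⟨0, c⟩) + U 0 * ofDescCoeffs (fun c => v ⟨i, c⟩) = 0 :=
    fun i => mul_add_mul_eq_zero_of_genSubres_mulVec_eq_zero (fun j => (hdeg j).le)
      (fun j => Nat.zero_le _) hv
  have h1 : (⟨1, hn⟩ : Fin n) ≠ 0 := Fin.ne_of_val_ne one_ne_zero
  have hblock0 : ofDescCoeffs (fun c => v ⟨0, c⟩) = 0 := by
    refine eq_zero_of_mul_add_mul_eq_zero (hcop 0 _ h1.symm) (hrel _ h1) ?_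
    rw [degree_eq_natDegree hU0, hdeg 0]
    exact degree_ofDescCoeffs_lt _
  have hblock : ∀ i, ofDescCoeffs (fun c => v ⟨i, c⟩) = 0 := by
    intro i
    rcases eq_or_ne i 0 with rfl | hi
    · exact hblock0
    · have hi' := hrel i hi
      rwa [hblock0, mul_zero, zero_add, mul_eq_zero, or_iff_right hU0] at hi'
  funext ⟨j, c⟩
  exact congrFun (ofDescCoeffs_eq_zero_iff.1 (hblock j)) c
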